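/- arXiv:math/0410395 — 4 statements merged into one kernel-verified Lean document; each statement's English description precedes it below -/
import Mathlib

section
/- Let J be an unbounded subinterval of ℝ and g : J → ℝ such that g′ exists and is locally absolutely continuous on J, with second derivative g″ ∈ L^∞(J). If g ∈ L^∞(J), then g′ ∈ L^∞(J) and ‖g′‖_{J,∞} ≤ 2√2·‖g‖_{J,∞}^{1/2}·‖g″‖_{J,∞}^{1/2}. -/
/-!
Put `M₀ = ‖g‖_∞` and `M₂ = ‖g''‖_∞`. The function `g'` is `M₂`-Lipschitz on `J`, so the mean value
theorem for `t ↦ g t - t g' x` on the segment between `x` and `y` gives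
`|g y - g x - (y - x) g' x| ≤ M₂ (y - x)²`. Since `g` is continuous, `|g| ≤ M₀` holds at every
point of `J`, not only almost everywhere, hence `|y - x| |g' x| ≤ 2 M₀ + M₂ (y - x)²` for all
`x, y ∈ J`. As `J` is unbounded, `|y - x|` takes every value `d > 0`, and minimizing the right
hand side of `|g' x| ≤ 2 M₀ / d + M₂ d` over `d` gives `|g' x| ≤ 2 √(2 M₀ M₂)`.
-/

open MeasureTheory Set

section EssSup

variable {α E : Type*} [MeasurableSpace α] {μ : Measure α} [NormedAddCommGroup E] {f : α → E}

theorem MeasureTheory.MemLp.ae_norm_le_eLpNorm_top (hf : MemLp f ⊤ μ) :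
    ∀ᵐ x ∂μ, ‖f x‖ ≤ (eLpNorm f ⊤ μ).toReal := by
  filter_upwards [ae_le_eLpNormEssSup (μ := μ) (f := f)] with x hx
  rw [eLpNorm_exponent_top, ← toReal_enorm]
  exact ENNReal.toReal_mono (eLpNorm_exponent_top (f := f) ▸ hf.eLpNorm_lt_top.ne) hx

theorem MeasureTheory.eLpNorm_top_toReal_le_of_ae_bound {C : ℝ} (hC : 0 ≤ C)
    (h : ∀ᵐ x ∂μ, ‖f x‖ ≤ C) : (eLpNorm f ⊤ μ).toReal ≤ C := by
  rw [eLpNorm_exponent_top]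
  exact ENNReal.toReal_le_of_le_ofReal hC (eLpNormEssSup_le_of_ae_bound h)

end EssSup

theorem Set.nontrivial_of_not_isBounded {α : Type*} [Bornology α] {s : Set α}
    (hs : ¬Bornology.IsBounded s) : s.Nontrivial := by
  by_contra h
  exact hs (not_nontrivial_iff.1 h).finite.isBounded

namespace Set.OrdConnected

variable {J : Set ℝ}

theorem exists_mem_abs_sub_eq (hJ : J.OrdConnected) (hJu : ¬Bornology.IsBounded J) {x : ℝ}
    (hx : x ∈ J) {d : ℝ} (hd : 0 ≤ d) : ∃ y ∈ J, |y - x| = d := by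
  rw [isBounded_iff_forall_norm_le] at hJu
  push Not at hJu
  obtain ⟨z, hz, hxz⟩ := hJu (|x| + d)
  rw [Real.norm_eq_abs] at hxz
  rcases le_total x z with hle | hle
  · refine ⟨x + d, hJ.out hx hz ⟨by linarith, ?_⟩, by simp [abs_of_nonneg hd]⟩
    cases abs_cases z <;> cases abs_cases x <;> linarith
  · refine ⟨x - d, hJ.out hz hx ⟨?_, by linarith⟩, by simp [abs_of_nonneg hd]⟩
    cases abs_cases z <;> cases abs_cases x <;> linarith

theorem forall_le_of_ae_restrict_le (hJ : J.OrdConnected) (hJn : J.Nontrivial) {f : ℝ → ℝ}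
    (hf : ContinuousOn f J) {C : ℝ} (h : ∀ᵐ x ∂volume.restrict J, f x ≤ C) :
    ∀ x ∈ J, f x ≤ C := by
  intro x hx
  obtain ⟨y, hy, hyx⟩ := hJn.exists_ne x
  have hsub : Icc (min x y) (max x y) ⊆ J := hJ.uIcc_subset hx hy
  have hmin : EqOn (fun t ↦ min (f t) C) f (Icc (min x y) (max x y)) := by
    refine Measure.eqOn_Icc_of_ae_eq volume (min_lt_max.2 hyx.symm).ne ?_
      ((hf.mono hsub).inf continuousOn_const) (hf.mono hsub)
    filter_upwards [ae_restrict_of_ae_restrict_of_subset hsub h] with t ht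
    exact min_eq_left ht
  exact min_eq_left_iff.1 (hmin ⟨min_le_left x y, le_max_left x y⟩)

end Set.OrdConnected

section Calculus

variable {E : Type*} [NormedAddCommGroup E] [NormedSpace ℝ E] {J : Set ℝ}

theorem lipschitzOnWith_of_sub_eq_integral (hJ : J.OrdConnected) {f f' : ℝ → E} {K : NNReal}
    (hftc : ∀ a ∈ J, ∀ b ∈ J, f b - f a = ∫ t in a..b, f' t)
    (hf' : ∀ᵐ t ∂volume.restrict J, ‖f' t‖ ≤ K) : LipschitzOnWith K f J := by
  refine LipschitzOnWith.of_dist_le_mul fun b hb a ha ↦ ?_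
  rw [dist_eq_norm, hftc a ha b hb, Real.dist_eq]
  refine intervalIntegral.norm_integral_le_of_norm_le_const_ae ?_
  filter_upwards [(ae_restrict_iff' hJ.measurableSet).1 hf'] with t ht htab
  exact ht (hJ.uIcc_subset ha hb (uIoc_subset_uIcc htab))

theorem norm_sub_sub_smul_le_of_lipschitzOnWith (hJ : J.OrdConnected) {g g' : ℝ → E}
    {K : NNReal} (hderiv : ∀ x ∈ J, HasDerivWithinAt g (g' x) J x)
    (hlip : LipschitzOnWith K g' J) {x y : ℝ} (hx : x ∈ J) (hy : y ∈ J) :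
    ‖g y - g x - (y - x) • g' x‖ ≤ K * (y - x) ^ 2 := by
  have hsub : uIcc x y ⊆ J := hJ.uIcc_subset hx hy
  have hderiv' : ∀ t ∈ uIcc x y,
      HasDerivWithinAt (fun s ↦ g s - s • g' x) (g' t - g' x) (uIcc x y) t := fun t ht ↦ by
    simpa only [one_smul, id_eq] using
      ((hderiv t (hsub ht)).mono hsub).fun_sub ((hasDerivWithinAt_id t _).smul_const (g' x))
  have hbound : ∀ t ∈ uIcc x y, ‖g' t - g' x‖ ≤ K * |y - x| := fun t ht ↦ by
    calc ‖g' t - g' x‖ ≤ K * |t - x| := by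
          simpa [← dist_eq_norm, Real.dist_eq] using hlip.dist_le_mul t (hsub ht) x hx
      _ ≤ K * |y - x| := mul_le_mul_of_nonneg_left (abs_sub_left_of_mem_uIcc ht) K.2
  have := convex_uIcc x y |>.norm_image_sub_le_of_norm_hasDerivWithin_le hderiv' hbound
    left_mem_uIcc right_mem_uIcc
  rw [Real.norm_eq_abs, mul_assoc, ← sq, sq_abs] at this
  convert this using 2
  rw [sub_smul]
  abel

theorem abs_sub_mul_norm_le_of_lipschitzOnWith (hJ : J.OrdConnected) {g g' : ℝ → E}
    {K : NNReal} (hderiv : ∀ x ∈ J, HasDerivWithinAt g (g' x) J x)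
    (hlip : LipschitzOnWith K g' J) {M : ℝ} (hg : ∀ x ∈ J, ‖g x‖ ≤ M) {x y : ℝ} (hx : x ∈ J)
    (hy : y ∈ J) : |y - x| * ‖g' x‖ ≤ 2 * M + K * (y - x) ^ 2 :=
  calc |y - x| * ‖g' x‖ = ‖(g y - g x) - (g y - g x - (y - x) • g' x)‖ := by
        rw [sub_sub_cancel, norm_smul, Real.norm_eq_abs]
    _ ≤ ‖g y - g x‖ + ‖g y - g x - (y - x) • g' x‖ := norm_sub_le _ _
    _ ≤ 2 * M + K * (y - x) ^ 2 := by
        linarith [norm_sub_le (g y) (g x), hg x hx, hg y hy,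
          norm_sub_sub_smul_le_of_lipschitzOnWith hJ hderiv hlip hx hy]

end Calculus

theorem le_two_mul_sqrt_mul_sqrt_of_forall_mul_le {A a b : ℝ} (hA : 0 ≤ A) (ha : 0 ≤ a)
    (hb : 0 ≤ b) (h : ∀ d > 0, A * d ≤ a + b * d ^ 2) : A ≤ 2 * √a * √b := by
  rcases hA.eq_or_lt with rfl | hA
  · positivity
  rcases hb.eq_or_lt with rfl | hb
  · have := h ((a + 1) / A) (by positivity)
    rw [mul_div_cancel₀ _ hA.ne'] at this
    linarith
  have hd := h (A / (2 * b)) (by positivity)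
  have hsq : A ^ 2 ≤ (2 * √a * √b) ^ 2 := by
    rw [mul_pow, mul_pow, Real.sq_sqrt ha, Real.sq_sqrt hb.le]
    field_simp at hd
    nlinarith
  exact (pow_le_pow_iff_left₀ hA.le (by positivity) two_ne_zero).1 hsq

theorem landau_inf_inf_general
    (J : Set ℝ) (hJ : J.OrdConnected) (hJu : ¬ Bornology.IsBounded J)
    (g g' g'' : ℝ → ℝ)
    (hderiv : ∀ x ∈ J, HasDerivWithinAt g (g' x) J x)
    (hftc : ∀ a ∈ J, ∀ b ∈ J, g' b - g' a = ∫ t in a..b, g'' t)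
    (hg'' : MemLp g'' ⊤ (volume.restrict J))
    (hg : MemLp g ⊤ (volume.restrict J)) :
    MemLp g' ⊤ (volume.restrict J) ∧
      (eLpNorm g' ⊤ (volume.restrict J)).toReal ≤
        2 * Real.sqrt 2 * (eLpNorm g ⊤ (volume.restrict J)).toReal ^ ((1 : ℝ) / 2) *
          (eLpNorm g'' ⊤ (volume.restrict J)).toReal ^ ((1 : ℝ) / 2) := by
  set M₀ := (eLpNorm g ⊤ (volume.restrict J)).toReal
  set M₂ := (eLpNorm g'' ⊤ (volume.restrict J)).toNNReal
  have hlip : LipschitzOnWith M₂ g' J :=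
    lipschitzOnWith_of_sub_eq_integral hJ hftc hg''.ae_norm_le_eLpNorm_top
  have hgM₀ : ∀ x ∈ J, ‖g x‖ ≤ M₀ :=
    hJ.forall_le_of_ae_restrict_le (nontrivial_of_not_isBounded hJu)
      (fun x hx ↦ (hderiv x hx).continuousWithinAt.norm) hg.ae_norm_le_eLpNorm_top
  have hbound : ∀ᵐ x ∂volume.restrict J, ‖g' x‖ ≤ 2 * √(2 * M₀) * √M₂ := by
    refine (ae_restrict_iff' hJ.measurableSet).2 (.of_forall fun x hx ↦ ?_)
    refine le_two_mul_sqrt_mul_sqrt_of_forall_mul_le (norm_nonneg _) (by positivity) M₂.2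
      fun d hd ↦ ?_
    obtain ⟨y, hy, rfl⟩ := hJ.exists_mem_abs_sub_eq hJu hx hd.le
    rw [sq_abs, mul_comm]
    exact abs_sub_mul_norm_le_of_lipschitzOnWith hJ hderiv hlip hgM₀ hx hy
  refine ⟨memLp_top_of_bound (hlip.continuousOn.aestronglyMeasurable hJ.measurableSet) _ hbound,
    ?_⟩
  rw [← Real.sqrt_eq_rpow, ← Real.sqrt_eq_rpow, mul_assoc 2, ← Real.sqrt_mul zero_le_two]
  exact eLpNorm_top_toReal_le_of_ae_bound (by positivity) hbound

/-- **Corollary (Landau, `L^∞` case).** If `g : J → ℝ` (with `J` an unbounded interval) has a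
derivative `g'` that is locally absolutely continuous with a.e. derivative `g''`, and
`g, g'' ∈ L^∞(J)`, then `g' ∈ L^∞(J)` and
`‖g'‖_{J,∞} ≤ 2√2 ‖g‖_{J,∞}^{1/2} ‖g''‖_{J,∞}^{1/2}`. -/
theorem landau_inf_inf
    (J : Set ℝ) (hJ : J.OrdConnected) (hJu : ¬ Bornology.IsBounded J)
    (g g' g'' : ℝ → ℝ)
    (hderiv : ∀ x ∈ J, HasDerivWithinAt g (g' x) J x)
    (hint : ∀ a ∈ J, ∀ b ∈ J, IntervalIntegrable g'' volume a b)
    (hftc : ∀ a ∈ J, ∀ b ∈ J, g' b - g' a = ∫ t in a..b, g'' t)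
    (hg'' : MemLp g'' ⊤ (volume.restrict J))
    (hg : MemLp g ⊤ (volume.restrict J)) :
    MemLp g' ⊤ (volume.restrict J) ∧
      (eLpNorm g' ⊤ (volume.restrict J)).toReal ≤
        2 * Real.sqrt 2 * (eLpNorm g ⊤ (volume.restrict J)).toReal ^ ((1 : ℝ) / 2) *
          (eLpNorm g'' ⊤ (volume.restrict J)).toReal ^ ((1 : ℝ) / 2) :=
  landau_inf_inf_general J hJ hJu g g' g'' hderiv hftc hg'' hg
end

section
/- Let J be an unbounded subinterval of ℝ and g : J → ℝ a locally absolutely continuous function on J with derivative g′. Assume g′ ∈ L^1(J), that g′ is of locally bounded variation on J, and that there exist a constant V_J > 0 and r ∈ (0,1] such that the total variation of g′ on the interval with endpoints a and b is at most V_J·|a − b|^r for all a, b ∈ J. Then g′ ∈ L^∞(J) and ‖g′‖_{J,∞} ≤ ((r+1)/r^{r/(r+1)})·‖g′‖_{J,1}^{r/(r+1)}·V_J^{1/(r+1)}. -/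
/-!
At a point `x` of `J` with `M = |g' x| > 0`, the Hölder bound `|g' t - g' x| ≤ V |t - x|^r`
coming from the variation keeps `|g'|` above the tent `M - V |t - x|^r` on an interval of
length `h = (M / V)^(1/r)` having `x` as an endpoint; since `J` is an unbounded interval, one of
the two such intervals lies in `J`. Integrating the tent gives `‖g'‖₁ ≥ M h r / (r + 1)`, and
solving for `M` gives the bound with the constant `((r + 1) / r)^(r/(r+1))`, which is at most
`(r + 1) / r^(r/(r+1))`.
-/

open MeasureTheory Set

lemma dist_le_of_eVariationOn_le {α E : Type*} [LinearOrder α] [PseudoMetricSpace E]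
    {f : α → E} {s : Set α} {a b : α} {c : ℝ} (ha : a ∈ s) (hb : b ∈ s) (hc : 0 ≤ c)
    (h : eVariationOn f s ≤ ENNReal.ofReal c) : dist (f a) (f b) ≤ c := by
  rw [← ENNReal.ofReal_le_ofReal_iff hc, ← edist_dist]
  exact (eVariationOn.edist_le f ha hb).trans h

lemma Set.OrdConnected.Icc_subset_or_Icc_subset_of_not_isBounded {J : Set ℝ}
    (hJ : J.OrdConnected) (hJu : ¬ Bornology.IsBounded J) {x : ℝ} (hx : x ∈ J) (h : ℝ) :
    Icc x (x + h) ⊆ J ∨ Icc (x - h) x ⊆ J := by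
  rw [isBounded_iff_bddBelow_bddAbove, not_and_or] at hJu
  rcases hJu with hbelow | habove
  · obtain ⟨y, hy, hyx⟩ := not_bddBelow_iff.mp hbelow (x - h)
    exact Or.inr ((Icc_subset_Icc_left hyx.le).trans (hJ.out hy hx))
  · obtain ⟨y, hy, hxy⟩ := not_bddAbove_iff.mp habove (x + h)
    exact Or.inl ((Icc_subset_Icc_right hxy.le).trans (hJ.out hx hy))

lemma integral_abs_rpow_of_nonneg {h r : ℝ} (hh : 0 ≤ h) (hr : -1 < r) :
    ∫ s in (0 : ℝ)..h, |s| ^ r = h ^ (r + 1) / (r + 1) := by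
  have habs : EqOn (fun s : ℝ => |s| ^ r) (fun s => s ^ r) (uIcc 0 h) := fun s hs => by
    rw [uIcc_of_le hh] at hs
    simp only [abs_of_nonneg hs.1]
  rw [intervalIntegral.integral_congr habs, integral_rpow (Or.inl hr),
    Real.zero_rpow (by linarith), sub_zero]

lemma integral_abs_sub_rpow_of_endpoint {u v x r : ℝ} (huv : u ≤ v) (hx : x = u ∨ x = v)
    (hr : -1 < r) : ∫ t in u..v, |t - x| ^ r = (v - u) ^ (r + 1) / (r + 1) := by
  rcases hx with rfl | rfl
  · rw [intervalIntegral.integral_comp_sub_right (fun s => |s| ^ r), sub_self,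
      integral_abs_rpow_of_nonneg (sub_nonneg.2 huv) hr]
  · simp_rw [abs_sub_comm _ x]
    rw [intervalIntegral.integral_comp_sub_left (fun s => |s| ^ r), sub_self,
      integral_abs_rpow_of_nonneg (sub_nonneg.2 huv) hr]

lemma norm_mul_sub_le_integral_norm {E : Type*} [NormedAddCommGroup E] {f : ℝ → E}
    {u v x V r : ℝ} (huv : u ≤ v) (hx : x = u ∨ x = v) (hr : 0 ≤ r)
    (hf : IntervalIntegrable f volume u v)
    (hhol : ∀ t ∈ Icc u v, dist (f x) (f t) ≤ V * |x - t| ^ r) :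
    ‖f x‖ * (v - u) - V * ((v - u) ^ (r + 1) / (r + 1)) ≤ ∫ t in u..v, ‖f t‖ := by
  have htent : Continuous fun t => V * |t - x| ^ r := by
    have := Real.continuous_rpow_const hr
    fun_prop
  have htent_int : ∫ t in u..v, (‖f x‖ - V * |t - x| ^ r) =
      ‖f x‖ * (v - u) - V * ((v - u) ^ (r + 1) / (r + 1)) := by
    rw [intervalIntegral.integral_sub intervalIntegrable_const (htent.intervalIntegrable u v),
      intervalIntegral.integral_const, intervalIntegral.integral_const_mul,
      integral_abs_sub_rpow_of_endpoint huv hx (by linarith), smul_eq_mul, mul_comm]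
  rw [← htent_int]
  refine intervalIntegral.integral_mono_on huv
    (intervalIntegrable_const.sub (htent.intervalIntegrable u v)) hf.norm fun t ht => ?_
  have hdist := hhol t ht
  rw [dist_eq_norm, abs_sub_comm x t] at hdist
  linarith [norm_sub_norm_le (f x) (f t)]

lemma mul_rpow_le_of_sub_le {V r h N : ℝ} (hV : 0 < V) (hr : 0 < r) (hh : 0 ≤ h)
    (hN : V * h ^ r * h - V * (h ^ (r + 1) / (r + 1)) ≤ N) :
    V * h ^ r ≤ ((r + 1) / r * N) ^ (r / (r + 1)) * V ^ (1 / (r + 1)) := by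
  have hr1 : 0 < r + 1 := by linarith
  have hpow : h ^ (r + 1) = h ^ r * h := Real.rpow_add_one' hh hr1.ne'
  have hmass : h ^ (r + 1) ≤ (r + 1) / r * N / V := by
    rw [le_div_iff₀ hV, div_mul_eq_mul_div, le_div_iff₀ hr]
    rw [hpow] at hN ⊢
    field_simp at hN
    linarith
  have hhr : h ^ r = (h ^ (r + 1)) ^ (r / (r + 1)) := by
    rw [← Real.rpow_mul hh, mul_div_cancel₀ r hr1.ne']
  have hV_split : V = V ^ (r / (r + 1)) * V ^ (1 / (r + 1)) := by
    rw [← Real.rpow_add hV, ← add_div, div_self hr1.ne', Real.rpow_one]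
  have hA : 0 ≤ (r + 1) / r * N := by
    have := mul_nonneg ((Real.rpow_nonneg hh _).trans hmass) hV.le
    rwa [div_mul_cancel₀ _ hV.ne'] at this
  calc V * h ^ r
      ≤ V * ((r + 1) / r * N / V) ^ (r / (r + 1)) := by
        rw [hhr]
        gcongr
    _ = ((r + 1) / r * N) ^ (r / (r + 1)) * V ^ (1 / (r + 1)) := by
        rw [Real.div_rpow hA hV.le]
        nth_rewrite 1 [hV_split]
        field_simp

theorem norm_le_of_dist_le_rpow_of_integrableOn {E : Type*} [NormedAddCommGroup E]
    {J : Set ℝ} (hJ : J.OrdConnected) (hJu : ¬ Bornology.IsBounded J) {f : ℝ → E}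
    (hf : IntegrableOn f J) {V r : ℝ} (hV : 0 < V) (hr : 0 < r)
    (hhol : ∀ a ∈ J, ∀ b ∈ J, dist (f a) (f b) ≤ V * |a - b| ^ r) {x : ℝ} (hx : x ∈ J) :
    ‖f x‖ ≤ ((r + 1) / r * ∫ t in J, ‖f t‖) ^ (r / (r + 1)) * V ^ (1 / (r + 1)) := by
  set h := (‖f x‖ / V) ^ r⁻¹
  have hh : 0 ≤ h := Real.rpow_nonneg (div_nonneg (norm_nonneg _) hV.le) _
  have hVh : V * h ^ r = ‖f x‖ := by
    rw [Real.rpow_inv_rpow (div_nonneg (norm_nonneg _) hV.le) hr.ne',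
      mul_div_cancel₀ _ hV.ne']
  obtain ⟨u, v, hvu, hxuv, hsub⟩ : ∃ u v, v - u = h ∧ (x = u ∨ x = v) ∧ Icc u v ⊆ J := by
    rcases hJ.Icc_subset_or_Icc_subset_of_not_isBounded hJu hx h with hs | hs
    · exact ⟨x, x + h, by ring, Or.inl rfl, hs⟩
    · exact ⟨x - h, x, by ring, Or.inr rfl, hs⟩
  have huv : u ≤ v := by linarith
  have htent := norm_mul_sub_le_integral_norm huv hxuv hr.le
    ((intervalIntegrable_iff_integrableOn_Icc_of_le huv).2 (hf.mono_set hsub))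
    fun t ht => hhol x hx t (hsub ht)
  have hJint : ∫ t in u..v, ‖f t‖ ≤ ∫ t in J, ‖f t‖ := by
    rw [intervalIntegral.integral_of_le huv]
    exact setIntegral_mono_set hf.norm (ae_of_all _ fun t => norm_nonneg _)
      (Ioc_subset_Icc_self.trans hsub).eventuallyLE
  rw [hvu, ← hVh] at htent
  rw [← hVh]
  exact mul_rpow_le_of_sub_le hV hr hh (htent.trans hJint)

lemma rpow_div_add_one_mul_le {r N : ℝ} (hr : 0 < r) (hN : 0 ≤ N) :
    ((r + 1) / r * N) ^ (r / (r + 1)) ≤ (r + 1) / r ^ (r / (r + 1)) * N ^ (r / (r + 1)) := by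
  rw [Real.mul_rpow (by positivity) hN, Real.div_rpow (by positivity) hr.le]
  gcongr
  exact Real.rpow_le_self_of_one_le (by linarith) ((div_le_one (by linarith)).2 (by linarith))

theorem landau_sup_norm_of_variation_bound_L1_general
    (J : Set ℝ) (hJ : J.OrdConnected) (hJu : ¬ Bornology.IsBounded J)
    (g' : ℝ → ℝ)
    (hg'1 : MemLp g' 1 (volume.restrict J))
    (V r : ℝ) (hV : 0 < V) (hr : r ∈ Ioc (0 : ℝ) 1)
    (hvar : ∀ a ∈ J, ∀ b ∈ J,
      eVariationOn g' (uIcc a b) ≤ ENNReal.ofReal (V * |a - b| ^ r)) :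
    MemLp g' ⊤ (volume.restrict J) ∧
      (eLpNorm g' ⊤ (volume.restrict J)).toReal ≤
        (r + 1) / r ^ (r / (r + 1)) *
          (eLpNorm g' 1 (volume.restrict J)).toReal ^ (r / (r + 1)) *
            V ^ (1 / (r + 1)) := by
  obtain ⟨hr0, -⟩ := hr
  have hint : IntegrableOn g' J := memLp_one_iff_integrable.mp hg'1
  have hnorm : (eLpNorm g' 1 (volume.restrict J)).toReal = ∫ t in J, ‖g' t‖ := by
    rw [toReal_eLpNorm hint.aestronglyMeasurable,
      lpNorm_one_eq_integral_norm hint.aestronglyMeasurable]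
  have hhol : ∀ a ∈ J, ∀ b ∈ J, dist (g' a) (g' b) ≤ V * |a - b| ^ r := fun a ha b hb =>
    dist_le_of_eVariationOn_le left_mem_uIcc right_mem_uIcc (by positivity) (hvar a ha b hb)
  set C := (r + 1) / r ^ (r / (r + 1)) *
    (eLpNorm g' 1 (volume.restrict J)).toReal ^ (r / (r + 1)) * V ^ (1 / (r + 1))
  have hbound : ∀ x ∈ J, ‖g' x‖ ≤ C := fun x hx => by
    refine (norm_le_of_dist_le_rpow_of_integrableOn hJ hJu hint hV hr0 hhol hx).trans ?_
    rw [← hnorm]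
    exact mul_le_mul_of_nonneg_right (rpow_div_add_one_mul_le hr0 ENNReal.toReal_nonneg)
      (by positivity)
  have hae : ∀ᵐ x ∂volume.restrict J, ‖g' x‖ ≤ C :=
    (ae_restrict_iff' hJ.measurableSet).2 (ae_of_all _ hbound)
  have hess : eLpNorm g' ⊤ (volume.restrict J) ≤ ENNReal.ofReal C := by
    rw [eLpNorm_exponent_top]
    exact eLpNormEssSup_le_of_ae_bound hae
  exact ⟨memLp_top_of_bound hint.aestronglyMeasurable C hae,
    ENNReal.toReal_le_of_le_ofReal (by positivity) hess⟩

/-- **Theorem 4.** Let `J` be an unbounded interval of `ℝ` and `g : J → ℝ` locally absolutely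
continuous with derivative `g'`. If `g' ∈ L^1(J)`, `g'` is of locally bounded variation and its
variation on any subinterval with endpoints `a, b ∈ J` is `≤ V |a-b|^r` with `V > 0`,
`r ∈ (0,1]`, then `g' ∈ L^∞(J)` and
`‖g'‖_{J,∞} ≤ ((r+1)/r^{r/(r+1)}) ‖g'‖_{J,1}^{r/(r+1)} V^{1/(r+1)}`. -/
theorem landau_sup_norm_of_variation_bound_L1
    (J : Set ℝ) (hJ : J.OrdConnected) (hJu : ¬ Bornology.IsBounded J)
    (g g' : ℝ → ℝ) (hderiv : ∀ x ∈ J, HasDerivWithinAt g (g' x) J x)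
    (hg'1 : MemLp g' 1 (volume.restrict J))
    (hbv : ∀ a ∈ J, ∀ b ∈ J, BoundedVariationOn g' (uIcc a b))
    (V r : ℝ) (hV : 0 < V) (hr : r ∈ Ioc (0 : ℝ) 1)
    (hvar : ∀ a ∈ J, ∀ b ∈ J,
      eVariationOn g' (uIcc a b) ≤ ENNReal.ofReal (V * |a - b| ^ r)) :
    MemLp g' ⊤ (volume.restrict J) ∧
      (eLpNorm g' ⊤ (volume.restrict J)).toReal ≤
        (r + 1) / r ^ (r / (r + 1)) *
          (eLpNorm g' 1 (volume.restrict J)).toReal ^ (r / (r + 1)) *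
            V ^ (1 / (r + 1)) :=
  landau_sup_norm_of_variation_bound_L1_general J hJ hJu g' hg'1 V r hV hr hvar
end

section
/- Let J be an unbounded subinterval of ℝ and g : J → ℝ such that g′ exists and is locally absolutely continuous on J, with second derivative g″ ∈ L^∞(J). If g′ ∈ L^α(J) for some α > 1, then g′ ∈ L^∞(J) and ‖g′‖_{J,∞} ≤ ((α+1)/α^{α/(α+1)})·‖g′‖_{J,α}^{α/(α+1)}·‖g″‖_{J,∞}^{1/(α+1)}. (This is the case r = 1, V_J = ‖g″‖_{J,∞} of the bound ‖g′‖_{J,∞} ≤ ((αr+1)/(α^{αr/(αr+1)} r^{αr/(αr+1)}))‖g′‖_{J,α}^{αr/(αr+1)}V_J^{1/(αr+1)}.) -/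
open MeasureTheory Set

/-!
Since `|g''| ≤ M := ‖g''‖_∞`, the integral formula makes `g'` `M`-Lipschitz on `J`. Given `x ∈ J`
with `|g' x| = s`, unboundedness of `J` provides an interval of length `ℓ` in `J` with endpoint `x`,
on which `|g'| ≥ s - M ℓ`; hence `(s - M ℓ) ^ α * ℓ ≤ ‖g'‖_α ^ α` (Chebyshev). Taking the optimal
`ℓ = s / ((α + 1) M)` and solving for `s` gives the bound.
-/

lemma norm_sub_le_of_eq_intervalIntegral {E : Type*} [NormedAddCommGroup E] [NormedSpace ℝ E]
    {s : Set ℝ} (hs : s.OrdConnected) {f f' : ℝ → E} {M : ℝ}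
    (hf : ∀ a ∈ s, ∀ b ∈ s, f b - f a = ∫ t in a..b, f' t)
    (hM : ∀ᵐ t ∂volume.restrict s, ‖f' t‖ ≤ M) {x y : ℝ} (hx : x ∈ s) (hy : y ∈ s) :
    ‖f y - f x‖ ≤ M * |y - x| := by
  rw [hf x hx y hy]
  refine intervalIntegral.norm_integral_le_of_norm_le_const_ae ?_
  filter_upwards [(ae_restrict_iff' hs.measurableSet).1 hM] with t ht htxy
  exact ht (hs.uIcc_subset hx hy (uIoc_subset_uIcc htxy))

lemma Set.OrdConnected.exists_Icc_subset_inter_closedBall {s : Set ℝ} (hs : s.OrdConnected)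
    (hsu : ¬ Bornology.IsBounded s) {x : ℝ} (hx : x ∈ s) (ℓ : ℝ) :
    ∃ u, Icc u (u + ℓ) ⊆ s ∩ Metric.closedBall x ℓ := by
  rw [Real.closedBall_eq_Icc]
  rcases not_and_or.1 (mt isBounded_iff_bddBelow_bddAbove.2 hsu) with hb | hb
  · obtain ⟨a, ha, hax⟩ := not_bddBelow_iff.1 hb (x - ℓ)
    refine ⟨x - ℓ, fun t ht ↦ ⟨hs.out ha hx ⟨by linarith [ht.1], by linarith [ht.2]⟩, ?_⟩⟩
    exact ⟨ht.1, by linarith [ht.1, ht.2]⟩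
  · obtain ⟨b, hb, hxb⟩ := not_bddAbove_iff.1 hb (x + ℓ)
    refine ⟨x, fun t ht ↦ ⟨hs.out hx hb ⟨ht.1, by linarith [ht.2]⟩, ?_⟩⟩
    exact ⟨by linarith [ht.1, ht.2], ht.2⟩

lemma rpow_mul_measureReal_le_lpNorm_rpow {α E : Type*} [MeasurableSpace α] {μ : Measure α}
    [NormedAddCommGroup E] {f : α → E} {p : ENNReal} (hp0 : p ≠ 0) (hp : p ≠ ⊤)
    (hf : MemLp f p μ) {S : Set α} {c : ℝ} (hc : 0 ≤ c) (hcS : ∀ x ∈ S, c ≤ ‖f x‖) :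
    c ^ p.toReal * μ.real S ≤ lpNorm f p μ ^ p.toReal := by
  have hS : μ S ≤ μ {x | ENNReal.ofReal c ≤ ‖f x‖ₑ} := measure_mono fun x hx ↦ by
    simpa [← ofReal_norm] using ENNReal.ofReal_le_ofReal (hcS x hx)
  have h := (mul_le_mul_right hS _).trans (mul_meas_ge_le_pow_eLpNorm' μ hp0 hp hf.1 (.ofReal c))
  have h' := ENNReal.toReal_mono (by simp [hf.eLpNorm_ne_top]) h
  rwa [ENNReal.toReal_mul, ← ENNReal.toReal_rpow, ← ENNReal.toReal_rpow, ENNReal.toReal_ofReal hc,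
    toReal_eLpNorm hf.1] at h'

lemma rpow_sub_mul_mul_le_lpNorm_rpow {E : Type*} [NormedAddCommGroup E] {J : Set ℝ}
    (hJ : J.OrdConnected) (hJu : ¬ Bornology.IsBounded J) {f : ℝ → E} {M α : ℝ} (hM : 0 ≤ M)
    (hα : 0 < α) (hf : MemLp f (ENNReal.ofReal α) (volume.restrict J))
    (hlip : ∀ x ∈ J, ∀ y ∈ J, ‖f y - f x‖ ≤ M * |y - x|) {x ℓ : ℝ} (hx : x ∈ J) (hℓ : 0 ≤ ℓ)
    (hMℓ : M * ℓ ≤ ‖f x‖) :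
    (‖f x‖ - M * ℓ) ^ α * ℓ ≤ lpNorm f (ENNReal.ofReal α) (volume.restrict J) ^ α := by
  obtain ⟨u, hu⟩ := hJ.exists_Icc_subset_inter_closedBall hJu hx ℓ
  have hlower : ∀ t ∈ Icc u (u + ℓ), ‖f x‖ - M * ℓ ≤ ‖f t‖ := fun t ht ↦ by
    have htx : |t - x| ≤ ℓ := by simpa [Real.dist_eq] using (hu ht).2
    have := hlip x hx t (hu ht).1
    rw [norm_sub_rev] at this
    linarith [norm_sub_norm_le (f x) (f t), mul_le_mul_of_nonneg_left htx hM]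
  have h := rpow_mul_measureReal_le_lpNorm_rpow (by simpa using hα) ENNReal.ofReal_ne_top hf
    (sub_nonneg.2 hMℓ) hlower
  rwa [ENNReal.toReal_ofReal hα.le, measureReal_restrict_apply measurableSet_Icc,
    inter_eq_left.2 (hu.trans inter_subset_left), Real.volume_real_Icc_of_le (by linarith),
    add_sub_cancel_left] at h

lemma le_of_forall_rpow_sub_mul_mul_le {s M A α : ℝ} (hα : 0 < α) (hM : 0 ≤ M) (hA : 0 ≤ A)
    (h : ∀ ℓ, 0 ≤ ℓ → M * ℓ ≤ s → (s - M * ℓ) ^ α * ℓ ≤ A ^ α) :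
    s ≤ (α + 1) / α ^ (α / (α + 1)) * A ^ (α / (α + 1)) * M ^ (1 / (α + 1)) := by
  set B := (α + 1) / α ^ (α / (α + 1)) * A ^ (α / (α + 1)) * M ^ (1 / (α + 1)) with hB
  have hB0 : 0 ≤ B := by positivity
  rcases le_or_gt s 0 with hs | hs
  · exact hs.trans hB0
  rcases hM.eq_or_lt with rfl | hM
  · have h0 := h ((A ^ α + 1) / s ^ α) (by positivity) (by simpa using hs.le)
    rw [zero_mul, sub_zero, mul_div_cancel₀ _ (by positivity)] at h0
    linarith
  have hα1 : α + 1 ≠ 0 := by positivity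
  have hBpow : B ^ (α + 1) = (α + 1) ^ (α + 1) / α ^ α * A ^ α * M := by
    rw [hB, Real.mul_rpow (by positivity) (by positivity),
      Real.mul_rpow (by positivity) (by positivity), Real.div_rpow (by positivity) (by positivity),
      ← Real.rpow_mul hα.le, ← Real.rpow_mul hA, ← Real.rpow_mul hM.le, div_mul_cancel₀ _ hα1,
      one_div_mul_cancel hα1, Real.rpow_one]
  -- `ℓ ↦ (s - M ℓ) ^ α * ℓ` is maximal at `ℓ = s / ((α + 1) M)`
  have hMℓ : M * (s / ((α + 1) * M)) = s / (α + 1) := by field_simp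
  have hopt := h (s / ((α + 1) * M)) (by positivity) (hMℓ ▸ div_le_self hs.le (by linarith))
  rw [hMℓ, show s - s / (α + 1) = α / (α + 1) * s by field_simp; ring,
    Real.mul_rpow (by positivity) hs.le, Real.div_rpow hα.le (by positivity)] at hopt
  have hpow : s ^ (α + 1) ≤ B ^ (α + 1) := by
    rw [hBpow, Real.rpow_add_one hs.ne', Real.rpow_add_one hα1]
    field_simp at hopt ⊢
    linarith
  exact (Real.rpow_le_rpow_iff hs.le hB0 (by positivity)).1 hpow

lemma memLp_top_and_toReal_eLpNorm_le {α E : Type*} [MeasurableSpace α] {μ : Measure α}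
    [NormedAddCommGroup E] {f : α → E} (hf : AEStronglyMeasurable f μ) {C : ℝ} (hC : 0 ≤ C)
    (hfC : ∀ᵐ x ∂μ, ‖f x‖ ≤ C) :
    MemLp f ⊤ μ ∧ (eLpNorm f ⊤ μ).toReal ≤ C := by
  refine ⟨memLp_top_of_bound hf C hfC, ENNReal.toReal_le_of_le_ofReal hC ?_⟩
  simpa using eLpNorm_le_of_ae_bound (p := ⊤) hfC

theorem landau_alpha_inf_general
    (J : Set ℝ) (hJ : J.OrdConnected) (hJu : ¬ Bornology.IsBounded J)
    (g' g'' : ℝ → ℝ) (α : ℝ) (hα : 1 < α)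
    (hftc : ∀ a ∈ J, ∀ b ∈ J, g' b - g' a = ∫ t in a..b, g'' t)
    (hg'' : MemLp g'' ⊤ (volume.restrict J))
    (hg'α : MemLp g' (ENNReal.ofReal α) (volume.restrict J)) :
    MemLp g' ⊤ (volume.restrict J) ∧
      (eLpNorm g' ⊤ (volume.restrict J)).toReal ≤
        (α + 1) / α ^ (α / (α + 1)) *
          (eLpNorm g' (ENNReal.ofReal α) (volume.restrict J)).toReal ^ (α / (α + 1)) *
            (eLpNorm g'' ⊤ (volume.restrict J)).toReal ^ (1 / (α + 1)) := by
  have hα0 : 0 < α := by linarith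
  rw [toReal_eLpNorm (p := ENNReal.ofReal α) hg'α.1, toReal_eLpNorm hg''.1]
  set A := lpNorm g' (ENNReal.ofReal α) (volume.restrict J)
  set M := lpNorm g'' ⊤ (volume.restrict J)
  have hA : 0 ≤ A := lpNorm_nonneg
  have hM : 0 ≤ M := lpNorm_nonneg
  have hlip : ∀ x ∈ J, ∀ y ∈ J, ‖g' y - g' x‖ ≤ M * |y - x| := fun x hx y hy ↦
    norm_sub_le_of_eq_intervalIntegral hJ hftc (ae_le_lpNorm_exponent_top hg'') hx hy
  refine memLp_top_and_toReal_eLpNorm_le hg'α.1 (by positivity)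
    (ae_restrict_of_forall_mem hJ.measurableSet fun x hx ↦ ?_)
  exact le_of_forall_rpow_sub_mul_mul_le hα0 hM hA fun ℓ hℓ hMℓ ↦
    rpow_sub_mul_mul_le_lpNorm_rpow hJ hJu hM hα0 hg'α hlip hx hℓ hMℓ

/-- **Corollary.** If `g : J → ℝ` (with `J` an unbounded interval) has a derivative `g'` that
is locally absolutely continuous with a.e. derivative `g''`, `g'' ∈ L^∞(J)` and
`g' ∈ L^α(J)` for some `α > 1`, then `g' ∈ L^∞(J)` and
`‖g'‖_{J,∞} ≤ ((α+1)/α^{α/(α+1)}) ‖g'‖_{J,α}^{α/(α+1)} ‖g''‖_{J,∞}^{1/(α+1)}`. -/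
theorem landau_alpha_inf
    (J : Set ℝ) (hJ : J.OrdConnected) (hJu : ¬ Bornology.IsBounded J)
    (g g' g'' : ℝ → ℝ) (α : ℝ) (hα : 1 < α)
    (hderiv : ∀ x ∈ J, HasDerivWithinAt g (g' x) J x)
    (hint : ∀ a ∈ J, ∀ b ∈ J, IntervalIntegrable g'' volume a b)
    (hftc : ∀ a ∈ J, ∀ b ∈ J, g' b - g' a = ∫ t in a..b, g'' t)
    (hg'' : MemLp g'' ⊤ (volume.restrict J))
    (hg'α : MemLp g' (ENNReal.ofReal α) (volume.restrict J)) :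
    MemLp g' ⊤ (volume.restrict J) ∧
      (eLpNorm g' ⊤ (volume.restrict J)).toReal ≤
        (α + 1) / α ^ (α / (α + 1)) *
          (eLpNorm g' (ENNReal.ofReal α) (volume.restrict J)).toReal ^ (α / (α + 1)) *
            (eLpNorm g'' ⊤ (volume.restrict J)).toReal ^ (1 / (α + 1)) :=
  landau_alpha_inf_general J hJ hJu g' g'' α hα hftc hg'' hg'α
end

section
/- Let J be an unbounded subinterval of ℝ and g : J → ℝ such that g′ exists and is locally absolutely continuous on J, with second derivative g″ ∈ L^p(J) for some p > 1. If g′ ∈ L^α(J) for some α > 1, then g′ ∈ L^∞(J) and ‖g′‖_{J,∞} ≤ ((α(p−1)+p)/(α^{α(p−1)/(α(p−1)+p)}·(p−1)^{α(p−1)/(α(p−1)+p)}·p^{p/(α(p−1)+p)}))·‖g′‖_{J,α}^{α(p−1)/(α(p−1)+p)}·‖g″‖_{J,p}^{p/(α(p−1)+p)}. -/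
/-!
On a window `[a, a + h] ⊆ J` containing `x`, the fundamental theorem of calculus gives
`|g' x| ≤ ⨍ |g'| + ∫ |g''|`, and Hölder's inequality bounds the two terms by
`‖g'‖_α h^(-1/α)` and `‖g''‖_p h^(1-1/p)`. Because `J` is unbounded such a window exists for
every `h > 0`, and minimising `A h^(-1/α) + B h^(1-1/p)` over `h` yields the constant.
-/

open MeasureTheory Set Filter Topology

theorem setIntegral_norm_le_eLpNorm_mul_measureReal_rpow {α E : Type*} [MeasurableSpace α]
    [NormedAddCommGroup E] {μ : Measure α} {s t : Set α} (hst : s ⊆ t) (hs : μ s ≠ ⊤)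
    {f : α → E} {q : ℝ} (hq : 1 ≤ q) (hf : MemLp f (ENNReal.ofReal q) (μ.restrict t)) :
    ∫ x in s, ‖f x‖ ∂μ ≤
      (eLpNorm f (ENNReal.ofReal q) (μ.restrict t)).toReal * μ.real s ^ (1 - 1 / q) := by
  have : IsFiniteMeasure (μ.restrict s) := isFiniteMeasure_restrict.2 hs
  have hfs := hf.mono_measure (Measure.restrict_mono hst le_rfl)
  have holder := eLpNorm_le_eLpNorm_mul_rpow_measure_univ (ENNReal.one_le_ofReal.2 hq)
    hfs.aestronglyMeasurable
  rw [Measure.restrict_apply_univ, ENNReal.toReal_one, ENNReal.toReal_ofReal (by linarith),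
    div_one] at holder
  have hmono : eLpNorm f (ENNReal.ofReal q) (μ.restrict s) ≤
      eLpNorm f (ENNReal.ofReal q) (μ.restrict t) :=
    eLpNorm_mono_measure _ (Measure.restrict_mono hst le_rfl)
  rw [← lpNorm_one_eq_integral_norm hfs.aestronglyMeasurable,
    ← toReal_eLpNorm hfs.aestronglyMeasurable, measureReal_def, ENNReal.toReal_rpow,
    ← ENNReal.toReal_mul]
  exact ENNReal.toReal_mono (ENNReal.mul_ne_top hf.eLpNorm_ne_top
    (ENNReal.rpow_ne_top_of_nonneg (by rw [sub_nonneg, div_le_one (by linarith)]; exact hq) hs))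
    (holder.trans (mul_le_mul_left hmono _))

theorem abs_intervalIntegral_le_setIntegral_Icc_abs {f : ℝ → ℝ} {a b s t : ℝ}
    (hf : IntegrableOn f (Icc a b)) (hs : s ∈ Icc a b) (ht : t ∈ Icc a b) :
    |∫ u in s..t, f u| ≤ ∫ u in Icc a b, |f u| :=
  calc |∫ u in s..t, f u| ≤ ∫ u in uIoc s t, |f u| := by
        simpa only [Real.norm_eq_abs] using
          intervalIntegral.norm_integral_le_integral_norm_uIoc (f := f) (μ := volume)
    _ ≤ ∫ u in Icc a b, |f u| :=
        setIntegral_mono_set hf.abs (.of_forall fun _ ↦ abs_nonneg _)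
          (uIoc_subset_uIcc.trans (uIcc_subset_Icc hs ht)).eventuallyLE

theorem le_inv_mul_setIntegral_Icc_of_forall_le {f : ℝ → ℝ} {a b c : ℝ} (hab : a < b)
    (hf : IntegrableOn f (Icc a b)) (hc : ∀ t ∈ Icc a b, c ≤ f t) :
    c ≤ (b - a)⁻¹ * ∫ t in Icc a b, f t := by
  have h := setIntegral_ge_of_const_le_real measurableSet_Icc (by simp) hc hf
  rw [Real.volume_real_Icc_of_le hab.le] at h
  rw [le_inv_mul_iff₀ (sub_pos.2 hab)]
  linarith

theorem Set.OrdConnected.exists_Icc_mem_subset {J : Set ℝ} (hJ : J.OrdConnected)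
    (hJu : ¬ Bornology.IsBounded J) {x : ℝ} (hx : x ∈ J) {h : ℝ} (hh : 0 ≤ h) :
    ∃ a, x ∈ Icc a (a + h) ∧ Icc a (a + h) ⊆ J := by
  rw [isBounded_iff_bddBelow_bddAbove, not_and_or] at hJu
  rcases hJu with hbdd | hbdd
  · obtain ⟨y, hyJ, hy⟩ := not_bddBelow_iff.1 hbdd (x - h)
    exact ⟨x - h, by constructor <;> linarith, by
      rw [sub_add_cancel]; exact (Icc_subset_Icc_left hy.le).trans (hJ.out hyJ hx)⟩
  · obtain ⟨y, hyJ, hy⟩ := not_bddAbove_iff.1 hbdd (x + h)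
    exact ⟨x, by constructor <;> linarith, (Icc_subset_Icc_right hy.le).trans (hJ.out hx hyJ)⟩

theorem abs_le_eLpNorm_mul_rpow_add_eLpNorm_mul_rpow {J : Set ℝ} {f f' : ℝ → ℝ}
    {α p a b x : ℝ} (hab : a < b) (hsub : Icc a b ⊆ J) (hx : x ∈ Icc a b)
    (hα : 1 ≤ α) (hp : 1 ≤ p) (hf : MemLp f (ENNReal.ofReal α) (volume.restrict J))
    (hf' : MemLp f' (ENNReal.ofReal p) (volume.restrict J))
    (hftc : ∀ t ∈ Icc a b, f x - f t = ∫ u in t..x, f' u) :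
    |f x| ≤ (eLpNorm f (ENNReal.ofReal α) (volume.restrict J)).toReal * (b - a) ^ (-(1 / α)) +
      (eLpNorm f' (ENNReal.ofReal p) (volume.restrict J)).toReal * (b - a) ^ (1 - 1 / p) := by
  have hlen : 0 < b - a := sub_pos.2 hab
  have hIcc : volume (Icc a b) ≠ ⊤ := by simp
  have hintegrable {q : ℝ} (hq : 1 ≤ q) {u : ℝ → ℝ}
      (hu : MemLp u (ENNReal.ofReal q) (volume.restrict J)) : IntegrableOn u (Icc a b) :=
    (hu.mono_measure (Measure.restrict_mono hsub le_rfl)).integrable (ENNReal.one_le_ofReal.2 hq)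
  have holder {q : ℝ} (hq : 1 ≤ q) {u : ℝ → ℝ}
      (hu : MemLp u (ENNReal.ofReal q) (volume.restrict J)) :
      ∫ t in Icc a b, |u t| ≤
        (eLpNorm u (ENNReal.ofReal q) (volume.restrict J)).toReal * (b - a) ^ (1 - 1 / q) := by
    simpa only [Real.norm_eq_abs, Real.volume_real_Icc_of_le hab.le] using
      setIntegral_norm_le_eLpNorm_mul_measureReal_rpow hsub hIcc hq hu
  have hosc : ∀ t ∈ Icc a b, |f x| - ∫ u in Icc a b, |f' u| ≤ |f t| := fun t ht ↦ by
    have := hftc t ht ▸ abs_intervalIntegral_le_setIntegral_Icc_abs (hintegrable hp hf') ht hx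
    linarith [abs_sub_abs_le_abs_sub (f x) (f t)]
  have havg := le_inv_mul_setIntegral_Icc_of_forall_le hab (hintegrable hα hf).abs hosc
  have hpow : (b - a)⁻¹ * (b - a) ^ (1 - 1 / α) = (b - a) ^ (-(1 / α)) := by
    rw [← Real.rpow_neg_one, ← Real.rpow_add hlen]
    ring_nf
  calc |f x| ≤ (b - a)⁻¹ * (∫ t in Icc a b, |f t|) + ∫ u in Icc a b, |f' u| := by linarith
    _ ≤ (b - a)⁻¹ * ((eLpNorm f (ENNReal.ofReal α) (volume.restrict J)).toReal *
          (b - a) ^ (1 - 1 / α)) +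
        (eLpNorm f' (ENNReal.ofReal p) (volume.restrict J)).toReal * (b - a) ^ (1 - 1 / p) := by
      gcongr
      exacts [holder hα hf, holder hp hf']
    _ = _ := by rw [mul_left_comm, hpow]

theorem nonpos_of_forall_le_mul_rpow {y B b : ℝ} (hb : 0 < b) (h : ∀ t > 0, y ≤ B * t ^ b) :
    y ≤ 0 := by
  have hlim : Tendsto (fun t : ℝ ↦ B * t ^ b) (𝓝[>] 0) (𝓝 0) := by
    simpa [Real.zero_rpow hb.ne'] using
      (((Real.continuousAt_rpow_const 0 b (Or.inr hb.le)).tendsto.const_mul B).mono_left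
        nhdsWithin_le_nhds)
  exact ge_of_tendsto hlim (eventually_nhdsWithin_of_forall h)

theorem le_of_forall_le_mul_rpow_neg_add_mul_rpow {y A B a b : ℝ} (ha : 0 < a) (hb : 0 < b)
    (hA : 0 ≤ A) (hB : 0 ≤ B) (h : ∀ t > 0, y ≤ A * t ^ (-a) + B * t ^ b) :
    y ≤ (a + b) * (A / b) ^ (b / (a + b)) * (B / a) ^ (a / (a + b)) := by
  have hab : 0 < a + b := add_pos ha hb
  rcases hA.eq_or_lt with rfl | hA
  · rw [zero_div, Real.zero_rpow (by positivity), mul_zero, zero_mul]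
    exact nonpos_of_forall_le_mul_rpow hb fun t ht ↦ by simpa using h t ht
  rcases hB.eq_or_lt with rfl | hB
  · rw [zero_div, Real.zero_rpow (by positivity), mul_zero]
    refine nonpos_of_forall_le_mul_rpow (B := A) ha fun t ht ↦ ?_
    simpa [Real.rpow_neg (inv_pos.2 ht).le, Real.inv_rpow ht.le] using h t⁻¹ (inv_pos.2 ht)
  set t := (a * A / (b * B)) ^ (a + b)⁻¹
  have ht : 0 < t := by positivity
  -- At `t` the two terms below coincide, so their convex combination with weights `θ'`, `θ`
  -- equals their weighted geometric mean, in which `t` cancels.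
  have hcrit : (a + b) * (B / a) * t ^ b = (a + b) * (A / b) * t ^ (-a) := by
    have htab : t ^ (a + b) = a * A / (b * B) := Real.rpow_inv_rpow (by positivity) hab.ne'
    rw [Real.rpow_add ht] at htab
    rw [Real.rpow_neg ht.le]
    field_simp at htab ⊢
    linear_combination htab
  set θ := a / (a + b)
  set θ' := b / (a + b)
  have hθ : θ' + θ = 1 := by rw [← add_div, add_comm, div_self hab.ne']
  have hexp : (t ^ (-a)) ^ θ' * (t ^ b) ^ θ = 1 := by
    rw [← Real.rpow_mul ht.le, ← Real.rpow_mul ht.le, ← Real.rpow_add ht]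
    convert Real.rpow_zero t using 2
    field_simp
    ring
  calc y ≤ A * t ^ (-a) + B * t ^ b := h t ht
    _ = θ' * ((a + b) * (A / b) * t ^ (-a)) + θ * ((a + b) * (B / a) * t ^ b) := by
      simp only [θ, θ']
      field_simp
    _ = ((a + b) * (A / b) * t ^ (-a)) ^ θ' * ((a + b) * (B / a) * t ^ b) ^ θ := by
      rw [hcrit, ← add_mul, hθ, one_mul, ← Real.rpow_add (by positivity), hθ, Real.rpow_one]
    _ = (a + b) ^ θ' * (a + b) ^ θ * (A / b) ^ θ' * (B / a) ^ θ *
          ((t ^ (-a)) ^ θ' * (t ^ b) ^ θ) := by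
      rw [Real.mul_rpow, Real.mul_rpow, Real.mul_rpow, Real.mul_rpow]
      · ring
      all_goals positivity
    _ = (a + b) * (A / b) ^ θ' * (B / a) ^ θ := by
      rw [hexp, ← Real.rpow_add hab, hθ, Real.rpow_one, mul_one]

theorem abs_le_mul_eLpNorm_rpow_mul_eLpNorm_rpow {J : Set ℝ} (hJ : J.OrdConnected)
    (hJu : ¬ Bornology.IsBounded J)
    {f f' : ℝ → ℝ} {p α : ℝ} (hp : 1 < p) (hα : 1 < α)
    (hftc : ∀ a ∈ J, ∀ b ∈ J, f b - f a = ∫ t in a..b, f' t)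
    (hf : MemLp f (ENNReal.ofReal α) (volume.restrict J))
    (hf' : MemLp f' (ENNReal.ofReal p) (volume.restrict J)) {x : ℝ} (hx : x ∈ J) :
    |f x| ≤
      (α * (p - 1) + p) /
          (α ^ (α * (p - 1) / (α * (p - 1) + p)) * (p - 1) ^ (α * (p - 1) / (α * (p - 1) + p)) *
            p ^ (p / (α * (p - 1) + p))) *
        (eLpNorm f (ENNReal.ofReal α) (volume.restrict J)).toReal ^
            (α * (p - 1) / (α * (p - 1) + p)) *
          (eLpNorm f' (ENNReal.ofReal p) (volume.restrict J)).toReal ^ (p / (α * (p - 1) + p)) := by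
  have hk : 0 < α * (p - 1) := mul_pos (by linarith) (by linarith)
  have hwindow : ∀ u > 0, |f x| ≤
      (eLpNorm f (ENNReal.ofReal α) (volume.restrict J)).toReal * u ^ (-p) +
        (eLpNorm f' (ENNReal.ofReal p) (volume.restrict J)).toReal * u ^ (α * (p - 1)) := by
    intro u hu
    obtain ⟨a, hxa, hsub⟩ := hJ.exists_Icc_mem_subset hJu hx (h := u ^ (α * p)) (by positivity)
    have := abs_le_eLpNorm_mul_rpow_add_eLpNorm_mul_rpow
      (lt_add_of_pos_right a (by positivity)) hsub hxa hα.le hp.le hf hf'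
      fun t ht ↦ hftc t (hsub ht) x hx
    rwa [add_sub_cancel_left, ← Real.rpow_mul hu.le, ← Real.rpow_mul hu.le,
      show α * p * -(1 / α) = -p by field_simp,
      show α * p * (1 - 1 / p) = α * (p - 1) by field_simp] at this
  refine (le_of_forall_le_mul_rpow_neg_add_mul_rpow (by linarith) hk ENNReal.toReal_nonneg
    ENNReal.toReal_nonneg hwindow).trans_eq ?_
  rw [add_comm p, Real.div_rpow ENNReal.toReal_nonneg hk.le,
    Real.div_rpow ENNReal.toReal_nonneg (by linarith), Real.mul_rpow (by linarith) (by linarith)]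
  ring

theorem landau_alpha_p_general
    (J : Set ℝ) (hJ : J.OrdConnected) (hJu : ¬ Bornology.IsBounded J)
    (g' g'' : ℝ → ℝ) (p α : ℝ) (hp : 1 < p) (hα : 1 < α)
    (hftc : ∀ a ∈ J, ∀ b ∈ J, g' b - g' a = ∫ t in a..b, g'' t)
    (hg'' : MemLp g'' (ENNReal.ofReal p) (volume.restrict J))
    (hg'α : MemLp g' (ENNReal.ofReal α) (volume.restrict J)) :
    MemLp g' ⊤ (volume.restrict J) ∧
      (eLpNorm g' ⊤ (volume.restrict J)).toReal ≤
        (α * (p - 1) + p) /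
            (α ^ (α * (p - 1) / (α * (p - 1) + p)) *
              (p - 1) ^ (α * (p - 1) / (α * (p - 1) + p)) *
                p ^ (p / (α * (p - 1) + p))) *
          (eLpNorm g' (ENNReal.ofReal α) (volume.restrict J)).toReal ^
              (α * (p - 1) / (α * (p - 1) + p)) *
            (eLpNorm g'' (ENNReal.ofReal p) (volume.restrict J)).toReal ^
              (p / (α * (p - 1) + p)) := by
  have hae : ∀ᵐ x ∂(volume.restrict J), ‖g' x‖ ≤ _ :=
    (ae_restrict_iff' hJ.measurableSet).2 <| .of_forall fun x hx ↦
      (Real.norm_eq_abs _).trans_le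
        (abs_le_mul_eLpNorm_rpow_mul_eLpNorm_rpow hJ hJu hp hα hftc hg'α hg'' hx)
  refine ⟨memLp_top_of_bound hg'α.aestronglyMeasurable _ hae,
    ENNReal.toReal_le_of_le_ofReal (by positivity) ?_⟩
  rw [eLpNorm_exponent_top]
  exact eLpNormEssSup_le_of_ae_bound hae

/-- **Corollary.** If `g : J → ℝ` (with `J` an unbounded interval) has a derivative `g'` that
is locally absolutely continuous with a.e. derivative `g''`, `g'' ∈ L^p(J)` for some `p > 1`
and `g' ∈ L^α(J)` for some `α > 1`, then `g' ∈ L^∞(J)` and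
`‖g'‖_{J,∞} ≤ ((α(p-1)+p)/(α^{α(p-1)/(α(p-1)+p)} (p-1)^{α(p-1)/(α(p-1)+p)} p^{p/(α(p-1)+p)}))
  ‖g'‖_{J,α}^{α(p-1)/(α(p-1)+p)} ‖g''‖_{J,p}^{p/(α(p-1)+p)}`. -/
theorem landau_alpha_p
    (J : Set ℝ) (hJ : J.OrdConnected) (hJu : ¬ Bornology.IsBounded J)
    (g g' g'' : ℝ → ℝ) (p α : ℝ) (hp : 1 < p) (hα : 1 < α)
    (hderiv : ∀ x ∈ J, HasDerivWithinAt g (g' x) J x)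
    (hint : ∀ a ∈ J, ∀ b ∈ J, IntervalIntegrable g'' volume a b)
    (hftc : ∀ a ∈ J, ∀ b ∈ J, g' b - g' a = ∫ t in a..b, g'' t)
    (hg'' : MemLp g'' (ENNReal.ofReal p) (volume.restrict J))
    (hg'α : MemLp g' (ENNReal.ofReal α) (volume.restrict J)) :
    MemLp g' ⊤ (volume.restrict J) ∧
      (eLpNorm g' ⊤ (volume.restrict J)).toReal ≤
        (α * (p - 1) + p) /
            (α ^ (α * (p - 1) / (α * (p - 1) + p)) *
              (p - 1) ^ (α * (p - 1) / (α * (p - 1) + p)) *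
                p ^ (p / (α * (p - 1) + p))) *
          (eLpNorm g' (ENNReal.ofReal α) (volume.restrict J)).toReal ^
              (α * (p - 1) / (α * (p - 1) + p)) *
            (eLpNorm g'' (ENNReal.ofReal p) (volume.restrict J)).toReal ^
              (p / (α * (p - 1) + p)) :=
  landau_alpha_p_general J hJ hJu g' g'' p α hp hα hftc hg'' hg'α
end
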